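/- If an instance (c,k) is integralizable, then for any voter budgets b ∈ Q_{≥0}^n with Σ_i b_i = k there exists an integral committee in the core of (c,k,b). -/

import Mathlib

/-!
Take a fractional core committee `z` and round each voter's utility down. These floors form an
integer utility vector that is fractionally feasible, so integralizability gives an integral
committee `x` meeting them. A coalition blocking `x` with an integral committee gains at least one
unit per member over `x`, hence strictly more than under `z`; read fractionally, that committee
would block `z`.
-/

/-- Candidate types: non-empty subsets of the voter set `Fin n`. -/
abbrev Typ (n : ℕ) := {S : Finset (Fin n) // S.Nonempty}

/-- Utility of voter `i` under an integral committee `x`. -/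
def intUtil {n : ℕ} (x : Typ n → ℕ) (i : Fin n) : ℤ :=
  ∑ R : Typ n, if i ∈ R.1 then (x R : ℤ) else 0

/-- Utility of voter `i` under a fractional committee `x`. -/
def fracUtil {n : ℕ} (x : Typ n → ℝ) (i : Fin n) : ℝ :=
  ∑ R : Typ n, if i ∈ R.1 then x R else 0

/-- `x` is an integral committee for the instance `(c, k)`. -/
def IsIntCommittee {n : ℕ} (c : Typ n → ℕ) (k : ℕ) (x : Typ n → ℕ) : Prop :=
  (∀ R, x R ≤ c R) ∧ (∑ R : Typ n, x R) ≤ k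

/-- `x` is a fractional committee for the instance `(c, k)`. -/
def IsFracCommittee {n : ℕ} (c : Typ n → ℕ) (k : ℕ) (x : Typ n → ℝ) : Prop :=
  (∀ R, 0 ≤ x R) ∧ (∀ R, x R ≤ (c R : ℝ)) ∧ (∑ R : Typ n, x R) ≤ (k : ℝ)

/-- `u` is integral-committee-feasible in `(c, k)`. -/
def IntFeasible {n : ℕ} (c : Typ n → ℕ) (k : ℕ) (u : Fin n → ℤ) : Prop :=
  ∃ x : Typ n → ℕ, IsIntCommittee c k x ∧ ∀ i, u i ≤ intUtil x i

/-- `u` is fractional-committee-feasible in `(c, k)`. -/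
def FracFeasible {n : ℕ} (c : Typ n → ℕ) (k : ℕ) (u : Fin n → ℤ) : Prop :=
  ∃ x : Typ n → ℝ, IsFracCommittee c k x ∧ ∀ i, (u i : ℝ) ≤ fracUtil x i

/-- `(c, k)` is integralizable. -/
def Integralizable {n : ℕ} (c : Typ n → ℕ) (k : ℕ) : Prop :=
  ∀ u : Fin n → ℤ, FracFeasible c k u → IntFeasible c k u

/-- Integral committee affordable for coalition `S` given budgets `b`. -/
def IsIntAffordable {n : ℕ} (c : Typ n → ℕ) (b : Fin n → ℚ) (S : Finset (Fin n))
    (x : Typ n → ℕ) : Prop :=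
  (∀ R, x R ≤ c R) ∧ (∑ R : Typ n, (x R : ℚ)) ≤ ∑ i ∈ S, b i

/-- Fractional committee affordable for coalition `S` given budgets `b`. -/
def IsFracAffordable {n : ℕ} (c : Typ n → ℕ) (b : Fin n → ℚ) (S : Finset (Fin n))
    (x : Typ n → ℝ) : Prop :=
  (∀ R, 0 ≤ x R) ∧ (∀ R, x R ≤ (c R : ℝ)) ∧
    (∑ R : Typ n, x R) ≤ ((∑ i ∈ S, b i : ℚ) : ℝ)

/-- `x` is an integral committee in the core of `(c, k, b)`. -/
def InCore {n : ℕ} (c : Typ n → ℕ) (k : ℕ) (b : Fin n → ℚ) (x : Typ n → ℕ) : Prop :=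
  IsIntCommittee c k x ∧
  ¬ ∃ (S : Finset (Fin n)) (y : Typ n → ℕ), S.Nonempty ∧ IsIntAffordable c b S y ∧
      ∀ i ∈ S, intUtil x i < intUtil y i

/-- The fractional core of `(c, k, b)` is non-empty. -/
def FracCoreNonempty {n : ℕ} (c : Typ n → ℕ) (k : ℕ) (b : Fin n → ℚ) : Prop :=
  ∃ x : Typ n → ℝ, IsFracCommittee c k x ∧
    ¬ ∃ (S : Finset (Fin n)) (y : Typ n → ℝ), S.Nonempty ∧ IsFracAffordable c b S y ∧
        ∀ i ∈ S, fracUtil x i < fracUtil y i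

theorem fracUtil_natCast {n : ℕ} (y : Typ n → ℕ) (i : Fin n) :
    fracUtil (fun R => (y R : ℝ)) i = intUtil y i := by
  simp only [fracUtil, intUtil]
  push_cast
  exact Finset.sum_congr rfl fun R _ => by split <;> simp

theorem IsIntAffordable.natCast {n : ℕ} {c : Typ n → ℕ} {b : Fin n → ℚ} {S : Finset (Fin n)}
    {y : Typ n → ℕ} (hy : IsIntAffordable c b S y) :
    IsFracAffordable c b S (fun R => (y R : ℝ)) := by
  refine ⟨fun _ => Nat.cast_nonneg _, fun R => Nat.cast_le.mpr (hy.1 R), ?_⟩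
  push_cast
  exact_mod_cast hy.2

theorem fracFeasible_floor_fracUtil {n : ℕ} {c : Typ n → ℕ} {k : ℕ} {z : Typ n → ℝ}
    (hz : IsFracCommittee c k z) : FracFeasible c k (fun i => ⌊fracUtil z i⌋) :=
  ⟨z, hz, fun _ => Int.floor_le _⟩

theorem inCore_of_floor_fracUtil_le {n : ℕ} {c : Typ n → ℕ} {k : ℕ} {b : Fin n → ℚ}
    {z : Typ n → ℝ}
    (hz : ¬ ∃ (S : Finset (Fin n)) (y : Typ n → ℝ), S.Nonempty ∧ IsFracAffordable c b S y ∧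
        ∀ i ∈ S, fracUtil z i < fracUtil y i)
    {x : Typ n → ℕ} (hx : IsIntCommittee c k x) (hxz : ∀ i, ⌊fracUtil z i⌋ ≤ intUtil x i) :
    InCore c k b x := by
  refine ⟨hx, fun ⟨S, y, hS, hy, hblock⟩ => hz ⟨S, _, hS, hy.natCast, fun i hi => ?_⟩⟩
  rw [fracUtil_natCast]
  exact Int.floor_lt.mp ((hxz i).trans_lt (hblock i hi))

theorem stmt2 (n : ℕ) (c : Typ n → ℕ) (k : ℕ) (b : Fin n → ℚ)
    (hint : Integralizable c k)
    (hfrac : FracCoreNonempty c k b) :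
    ∃ x : Typ n → ℕ, InCore c k b x := by
  obtain ⟨z, hz, hzcore⟩ := hfrac
  obtain ⟨x, hx, hxz⟩ := hint _ (fracFeasible_floor_fracUtil hz)
  exact ⟨x, inCore_of_floor_fracUtil_le hzcore hx hxz⟩
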